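/- For all integers n ≥ 2 and k ≥ 1, ||C_{k,n} − U_n|| ≤ ||R_{k,n} − U_n||, i.e. (1/2)·Σ_{π∈S_n} |C_{k,n}(π) − 1/n!| ≤ (1/2)·Σ_{π∈S_n} |R_{k,n}(π) − 1/n!|. -/

import Mathlib

/-- Number of descents of a permutation of `{1,...,n}` (here `Fin n`, 0-indexed):
the number of positions `i` with `1 ≤ i ≤ n-1` and `π(i) > π(i+1)`. -/
def numDescents (n : ℕ) (π : Equiv.Perm (Fin n)) : ℕ :=
  ((Finset.range (n - 1)).filter (fun i =>
    ∃ h : i + 1 < n, π ⟨i + 1, h⟩ < π ⟨i, Nat.lt_of_succ_lt h⟩)).card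

/-- `π` has a cyclic descent at `n` if `π(n) > π(1)`. -/
def hasCyclicDescentAtLast (n : ℕ) (π : Equiv.Perm (Fin n)) : Prop :=
  ∃ h : 0 < n, π ⟨0, h⟩ < π ⟨n - 1, Nat.sub_lt h Nat.one_pos⟩

instance (n : ℕ) (π : Equiv.Perm (Fin n)) : Decidable (hasCyclicDescentAtLast n π) :=
  exists_prop_decidable _

/-- Number of cyclic descents: `d(π)+1` if `π` has a cyclic descent at `n`, else `d(π)`. -/
def numCyclicDescents (n : ℕ) (π : Equiv.Perm (Fin n)) : ℕ :=
  numDescents n π + if hasCyclicDescentAtLast n π then 1 else 0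

/-- The k-riffle shuffle measure `R_{k,n}(π) = binom(n+k-d(π)-1, n) / k^n`. -/
noncomputable def riffle (k n : ℕ) (π : Equiv.Perm (Fin n)) : ℝ :=
  (Nat.choose (n + k - numDescents n π - 1) n : ℝ) / (k : ℝ) ^ n

/-- The cut-then-k-riffle-shuffle measure
`C_{k,n}(π) = binom(n+k-cd(π)-1, n-1) / (n·k^(n-1))`. -/
noncomputable def cutRiffle (k n : ℕ) (π : Equiv.Perm (Fin n)) : ℝ :=
  (Nat.choose (n + k - numCyclicDescents n π - 1) (n - 1) : ℝ) / ((n : ℝ) * (k : ℝ) ^ (n - 1))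

section Aux
open Finset

variable {n : ℕ} [NeZero n]

/-- The set of cyclic descent positions of `π`. -/
def DSet (n : ℕ) [NeZero n] (π : Equiv.Perm (Fin n)) : Finset (Fin n) :=
  Finset.univ.filter (fun i => π (i + 1) < π i)

lemma val_one_eq (hn : 2 ≤ n) : ((1 : Fin n) : ℕ) = 1 := by
  rw [Fin.val_one']; exact Nat.mod_eq_of_lt (by omega)

lemma add_one_val (hn : 2 ≤ n) (i : Fin n) (h : i.val + 1 < n) : (i + 1).val = i.val + 1 := by
  simp only [Fin.add_def, val_one_eq hn]; exact Nat.mod_eq_of_lt h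

lemma last_add_one (hn : 2 ≤ n) : ((⟨n - 1, by omega⟩ : Fin n) + 1) = 0 := by
  apply Fin.ext
  simp only [Fin.add_def, val_one_eq hn, Fin.val_zero]
  rw [Nat.sub_add_cancel (by omega), Nat.mod_self]

lemma ne_add_one (hn : 2 ≤ n) (i : Fin n) : i + 1 ≠ i := by
  intro h
  have h1 : ((1 : Fin n) : ℕ) = 1 := val_one_eq hn
  have := congrArg Fin.val h
  simp only [Fin.add_def, h1] at this
  rcases Nat.lt_or_ge (i.val + 1) n with h2 | h2
  · rw [Nat.mod_eq_of_lt h2] at this; omega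
  · have hi := i.isLt
    have : (i.val + 1) % n = i.val + 1 - n := by
      rw [Nat.mod_eq_sub_mod (by omega), Nat.mod_eq_of_lt (by omega)]
    omega

lemma one_le_card_DSet (hn : 2 ≤ n) (π : Equiv.Perm (Fin n)) : 1 ≤ (DSet n π).card := by
  rw [Nat.one_le_iff_ne_zero, Ne, Finset.card_eq_zero, ← Ne, ← Finset.nonempty_iff_ne_empty]
  obtain ⟨x, hx⟩ : ∃ x, π x = ⟨n - 1, by omega⟩ := ⟨π⁻¹ _, π.apply_symm_apply _⟩
  refine ⟨x, ?_⟩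
  simp only [DSet, mem_filter, mem_univ, true_and]
  have h4 : π (x + 1) ≠ π x := fun hc => ne_add_one hn x (π.injective hc)
  rw [hx] at h4 ⊢
  rw [Fin.lt_def]
  have h3 : (π (x + 1)).val < n := Fin.isLt _
  have h5 : (π (x + 1)).val ≠ n - 1 := fun hc => h4 (Fin.ext hc)
  simpa using (by omega : (π (x + 1)).val < n - 1)

lemma card_DSet_le (hn : 2 ≤ n) (π : Equiv.Perm (Fin n)) : (DSet n π).card ≤ n - 1 := by
  have hsub : DSet n π ⊆ Finset.univ.erase (π⁻¹ 0) := by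
    intro i hi
    simp only [DSet, mem_filter, mem_univ, true_and] at hi
    rw [Finset.mem_erase]
    refine ⟨?_, Finset.mem_univ _⟩
    intro hc
    subst hc
    rw [show π (π⁻¹ 0) = 0 from π.apply_symm_apply 0] at hi
    exact absurd hi (by simp [Fin.lt_def])
  calc (DSet n π).card ≤ (Finset.univ.erase (π⁻¹ 0)).card := Finset.card_le_card hsub
    _ = n - 1 := by rw [Finset.card_erase_of_mem (Finset.mem_univ _), Finset.card_univ,
        Fintype.card_fin]

lemma numDescents_eq (hn : 2 ≤ n) (π : Equiv.Perm (Fin n)) :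
    numDescents n π = ((DSet n π).filter (fun i => i.val < n - 1)).card := by
  rw [numDescents]
  apply Finset.card_bij (fun (m : ℕ) (hm : m ∈ (Finset.range (n-1)).filter _) => (⟨m, by
    simp only [mem_filter, Finset.mem_range] at hm; omega⟩ : Fin n))
  · intro m hm
    simp only [mem_filter, Finset.mem_range] at hm
    obtain ⟨hm1, h, hlt⟩ := hm
    simp only [DSet, mem_filter, mem_univ, true_and]
    constructor
    · have he : (⟨m, by omega⟩ : Fin n) + 1 = ⟨m + 1, h⟩ := by
        apply Fin.ext; rw [add_one_val hn _ (by simpa using h)]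
      rw [he]
      exact hlt
    · exact hm1
  · intro a ha b hb hab
    have := congrArg Fin.val hab
    simpa using this
  · intro i hi
    simp only [mem_filter, mem_univ, true_and, DSet] at hi
    obtain ⟨hd, hlt⟩ := hi
    refine ⟨i.val, ?_, by apply Fin.ext; rfl⟩
    simp only [mem_filter, Finset.mem_range]
    refine ⟨hlt, by omega, ?_⟩
    have he : i + 1 = (⟨i.val + 1, by omega⟩ : Fin n) := by
      apply Fin.ext; rw [add_one_val hn _ (by omega)]
    have he2 : (⟨i.val, by omega⟩ : Fin n) = i := Fin.ext rfl
    rw [← he, he2]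
    exact hd

lemma cyc_part (hn : 2 ≤ n) (π : Equiv.Perm (Fin n)) :
    ((DSet n π).filter (fun i => ¬ i.val < n - 1)).card
      = if hasCyclicDescentAtLast n π then 1 else 0 := by
  have hmem : ∀ i : Fin n, (i ∈ (DSet n π).filter (fun i => ¬ i.val < n - 1)) ↔
      (i = ⟨n - 1, by omega⟩ ∧ hasCyclicDescentAtLast n π) := by
    intro i
    simp only [mem_filter, mem_univ, true_and, DSet]
    constructor
    · rintro ⟨hd, hge⟩
      have hie : i = (⟨n - 1, by omega⟩ : Fin n) := by
        apply Fin.ext; have := i.isLt; simp; omega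
      rw [hie] at hd
      refine ⟨hie, by omega, ?_⟩
      rw [last_add_one hn] at hd
      convert hd using 2
      exact Fin.ext (by simp)
    · rintro ⟨hi, h0, hd⟩
      rw [hi]
      constructor
      · rw [last_add_one hn]
        convert hd using 2
        exact Fin.ext (by simp)
      · simp
  by_cases hc : hasCyclicDescentAtLast n π
  · rw [if_pos hc]
    rw [show (DSet n π).filter (fun i => ¬ i.val < n - 1) = {(⟨n - 1, by omega⟩ : Fin n)} by
      ext i; rw [hmem i, Finset.mem_singleton]; tauto]
    exact Finset.card_singleton _
  · rw [if_neg hc]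
    rw [show (DSet n π).filter (fun i => ¬ i.val < n - 1) = ∅ by
      ext i; rw [hmem i]; simp [hc]]
    rfl

lemma numCyclicDescents_eq_card (hn : 2 ≤ n) (π : Equiv.Perm (Fin n)) :
    numCyclicDescents n π = (DSet n π).card := by
  rw [numCyclicDescents, numDescents_eq hn, ← cyc_part hn π,
    Finset.card_filter_add_card_filter_not]

lemma mem_DSet_rot (π : Equiv.Perm (Fin n)) (j : Fin n) (i : Fin n) :
    i ∈ DSet n (π * (Equiv.addRight j : Equiv.Perm (Fin n))) ↔ i + j ∈ DSet n π := by
  simp only [DSet, mem_filter, mem_univ, true_and]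
  have : ∀ x : Fin n, (π * (Equiv.addRight j : Equiv.Perm (Fin n))) x = π (x + j) := fun _ => rfl
  rw [this, this, add_right_comm]

lemma card_DSet_rot (π : Equiv.Perm (Fin n)) (j : Fin n) :
    (DSet n (π * (Equiv.addRight j : Equiv.Perm (Fin n)))).card = (DSet n π).card := by
  apply Finset.card_bij' (fun i _ => i + j) (fun i _ => i - j)
  · intro a ha; exact (mem_DSet_rot π j a).1 ha
  · intro a ha; rw [mem_DSet_rot]; simpa [sub_add_cancel] using ha
  · intro a _; simp [add_sub_cancel_right]
  · intro a _; simp [sub_add_cancel]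

lemma hasCyc_iff_mem (hn : 2 ≤ n) (π : Equiv.Perm (Fin n)) :
    hasCyclicDescentAtLast n π ↔ (⟨n - 1, by omega⟩ : Fin n) ∈ DSet n π := by
  simp only [DSet, mem_filter, mem_univ, true_and, last_add_one hn]
  constructor
  · rintro ⟨h0, hd⟩
    convert hd using 2
    exact Fin.ext (by simp)
  · intro hd
    exact ⟨by omega, by convert hd using 2; exact Fin.ext (by simp)⟩

lemma numDescents_rot (hn : 2 ≤ n) (π : Equiv.Perm (Fin n)) (j : Fin n) :
    numDescents n (π * (Equiv.addRight j : Equiv.Perm (Fin n)))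
      + (if (⟨n - 1, by omega⟩ : Fin n) + j ∈ DSet n π then 1 else 0)
      = (DSet n π).card := by
  have h1 := numCyclicDescents_eq_card hn (π * (Equiv.addRight j : Equiv.Perm (Fin n)))
  rw [numCyclicDescents] at h1
  rw [card_DSet_rot] at h1
  rw [← h1]
  congr 1
  exact if_congr (((hasCyc_iff_mem hn _).trans (mem_DSet_rot π j _)).symm) rfl rfl

end Aux

/-- The key binomial identity:
`a·C(n+k-a, n) + (n-a)·C(n+k-a-1, n) = k·C(n+k-a-1, n-1)` for `1 ≤ a ≤ n-1`. -/
lemma key_binom (n k a : ℕ) (hn : 2 ≤ n) (hk : 1 ≤ k) (ha1 : 1 ≤ a) (ha2 : a ≤ n - 1) :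
    a * Nat.choose (n + k - a) n + (n - a) * Nat.choose (n + k - a - 1) n
      = k * Nat.choose (n + k - a - 1) (n - 1) := by
  rcases Nat.lt_or_ge k a with hka | hka
  · rw [Nat.choose_eq_zero_of_lt (by omega), Nat.choose_eq_zero_of_lt (by omega),
      Nat.choose_eq_zero_of_lt (by omega)]
    ring
  · set m := n + k - a - 1 with hm
    have hm1 : m + 1 = n + k - a := by omega
    have hmn : m + 1 = n + (k - a) := by omega
    have hpascal : Nat.choose (m + 1) n = Nat.choose m (n - 1) + Nat.choose m n := by
      have : n = (n - 1) + 1 := by omega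
      rw [this, Nat.choose_succ_succ]
      simp [Nat.succ_eq_add_one]
    have hmul : (m + 1) * Nat.choose m (n - 1) = Nat.choose (m + 1) n * n := by
      have h := Nat.add_one_mul_choose_eq m (n - 1)
      rw [show n - 1 + 1 = n from by omega] at h
      exact h
    have hx : n * Nat.choose m n = (k - a) * Nat.choose m (n - 1) := by
      have h1 : n * (Nat.choose m (n - 1) + Nat.choose m n)
          = (n + (k - a)) * Nat.choose m (n - 1) := by
        rw [← hpascal, ← hmn]
        rw [mul_comm] at hmul
        linarith [hmul]
      have h2 : n * Nat.choose m (n - 1) + n * Nat.choose m n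
          = n * Nat.choose m (n - 1) + (k - a) * Nat.choose m (n - 1) := by
        rw [← Nat.mul_add, h1, Nat.add_mul]
      exact Nat.add_left_cancel h2
    rw [← hm1, hpascal]
    have hka' : (k - a) + a = k := by omega
    calc a * (Nat.choose m (n - 1) + Nat.choose m n) + (n - a) * Nat.choose m n
        = a * Nat.choose m (n - 1) + (a + (n - a)) * Nat.choose m n := by ring
      _ = a * Nat.choose m (n - 1) + n * Nat.choose m n := by
          rw [show a + (n - a) = n by omega]
      _ = a * Nat.choose m (n - 1) + (k - a) * Nat.choose m (n - 1) := by rw [hx]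
      _ = ((k - a) + a) * Nat.choose m (n - 1) := by ring
      _ = k * Nat.choose m (n - 1) := by rw [hka']

section Main
open Finset

lemma sum_choose_rot {n : ℕ} [NeZero n] (k : ℕ) (hn : 2 ≤ n) (hk : 1 ≤ k)
    (π : Equiv.Perm (Fin n)) :
    ∑ j : Fin n, Nat.choose (n + k -
        numDescents n (π * (Equiv.addRight j : Equiv.Perm (Fin n))) - 1) n
      = k * Nat.choose (n + k - (DSet n π).card - 1) (n - 1) := by
  set a := (DSet n π).card with ha
  have ha1 : 1 ≤ a := one_le_card_DSet hn π
  have ha2 : a ≤ n - 1 := card_DSet_le hn π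
  have hterm : ∀ j : Fin n,
      Nat.choose (n + k - numDescents n (π * (Equiv.addRight j : Equiv.Perm (Fin n))) - 1) n
        = if (⟨n - 1, by omega⟩ : Fin n) + j ∈ DSet n π
          then Nat.choose (n + k - a) n else Nat.choose (n + k - a - 1) n := by
    intro j
    have h := numDescents_rot hn π j
    by_cases hm : (⟨n - 1, by omega⟩ : Fin n) + j ∈ DSet n π
    · rw [if_pos hm]
      rw [if_pos hm] at h
      congr 1
      omega
    · rw [if_neg hm]
      rw [if_neg hm] at h
      congr 1
      omega
  rw [Finset.sum_congr rfl (fun j _ => hterm j), Finset.sum_ite, Finset.sum_const,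
    Finset.sum_const, smul_eq_mul, smul_eq_mul]
  have hcard1 : (Finset.univ.filter
      (fun j : Fin n => (⟨n - 1, by omega⟩ : Fin n) + j ∈ DSet n π)).card = a := by
    rw [ha]
    refine Finset.card_bij' (fun j _ => (⟨n - 1, by omega⟩ : Fin n) + j)
      (fun i _ => i - (⟨n - 1, by omega⟩ : Fin n)) ?_ ?_ ?_ ?_
    · intro x hx; simp only [mem_filter, mem_univ, true_and] at hx; exact hx
    · intro x hx; simp only [mem_filter, mem_univ, true_and]
      simpa [add_sub_cancel] using hx
    · intro x _; simp
    · intro x _; simp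
  have hcard2 : (Finset.univ.filter
      (fun j : Fin n => ¬ ((⟨n - 1, by omega⟩ : Fin n) + j ∈ DSet n π))).card = n - a := by
    have := Finset.card_filter_add_card_filter_not
      (s := (Finset.univ : Finset (Fin n)))
      (p := fun j : Fin n => (⟨n - 1, by omega⟩ : Fin n) + j ∈ DSet n π)
    rw [Finset.card_univ, Fintype.card_fin, hcard1] at this
    omega
  rw [hcard1, hcard2]
  exact key_binom n k a hn hk ha1 ha2

lemma sum_riffle_rot {n : ℕ} [NeZero n] (k : ℕ) (hn : 2 ≤ n) (hk : 1 ≤ k)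
    (π : Equiv.Perm (Fin n)) :
    ∑ j : Fin n, riffle k n (π * (Equiv.addRight j : Equiv.Perm (Fin n)))
      = (n : ℝ) * cutRiffle k n π := by
  have hkR : (0 : ℝ) < (k : ℝ) := by positivity
  simp only [riffle]
  rw [← Finset.sum_div, ← Nat.cast_sum, sum_choose_rot k hn hk π]
  rw [cutRiffle, numCyclicDescents_eq_card hn π]
  have hpow : (k : ℝ) ^ n = (k : ℝ) ^ (n - 1) * k := by
    rw [← pow_succ]
    congr 1
    omega
  rw [hpow]
  have hk0 : (k : ℝ) ≠ 0 := by positivity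
  have hn0 : (n : ℝ) ≠ 0 := by positivity
  push_cast
  field_simp

end Main

/-- `||C_{k,n} - U_n|| ≤ ||R_{k,n} - U_n||`. -/
theorem totalVariation_cutRiffle_le_riffle (n k : ℕ) (hn : 2 ≤ n) (hk : 1 ≤ k) :
    (1 / 2) * ∑ π : Equiv.Perm (Fin n), |cutRiffle k n π - 1 / (Nat.factorial n : ℝ)|
      ≤ (1 / 2) * ∑ π : Equiv.Perm (Fin n), |riffle k n π - 1 / (Nat.factorial n : ℝ)| := by
  haveI : NeZero n := ⟨by omega⟩
  set u : ℝ := 1 / (Nat.factorial n : ℝ) with hu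
  have hnR : (0 : ℝ) < n := by positivity
  have hdecomp : ∀ π : Equiv.Perm (Fin n),
      cutRiffle k n π - u = (n : ℝ)⁻¹ *
        ∑ j : Fin n, (riffle k n (π * (Equiv.addRight j : Equiv.Perm (Fin n))) - u) := by
    intro π
    rw [Finset.sum_sub_distrib, sum_riffle_rot k hn hk π, Finset.sum_const,
      Finset.card_univ, Fintype.card_fin]
    field_simp
    ring
  have step1 : ∑ π : Equiv.Perm (Fin n), |cutRiffle k n π - u|
      ≤ (n : ℝ)⁻¹ * ∑ π : Equiv.Perm (Fin n), ∑ j : Fin n,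
          |riffle k n (π * (Equiv.addRight j : Equiv.Perm (Fin n))) - u| := by
    rw [Finset.mul_sum]
    apply Finset.sum_le_sum
    intro π _
    rw [hdecomp π, abs_mul, abs_of_nonneg (by positivity : (0:ℝ) ≤ (n:ℝ)⁻¹)]
    exact mul_le_mul_of_nonneg_left (Finset.abs_sum_le_sum_abs _ _) (by positivity)
  have step2 : ∀ j : Fin n,
      ∑ π : Equiv.Perm (Fin n), |riffle k n (π * (Equiv.addRight j : Equiv.Perm (Fin n))) - u|
        = ∑ σ : Equiv.Perm (Fin n), |riffle k n σ - u| := by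
    intro j
    exact Equiv.sum_comp (Equiv.mulRight (Equiv.addRight j : Equiv.Perm (Fin n)))
      (fun σ => |riffle k n σ - u|)
  have hmain : ∑ π : Equiv.Perm (Fin n), |cutRiffle k n π - u|
      ≤ ∑ σ : Equiv.Perm (Fin n), |riffle k n σ - u| := by
    calc ∑ π : Equiv.Perm (Fin n), |cutRiffle k n π - u|
        ≤ (n : ℝ)⁻¹ * ∑ π : Equiv.Perm (Fin n), ∑ j : Fin n,
            |riffle k n (π * (Equiv.addRight j : Equiv.Perm (Fin n))) - u| := step1
      _ = (n : ℝ)⁻¹ * ∑ j : Fin n, ∑ π : Equiv.Perm (Fin n),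
            |riffle k n (π * (Equiv.addRight j : Equiv.Perm (Fin n))) - u| := by
            rw [Finset.sum_comm]
      _ = (n : ℝ)⁻¹ * ∑ j : Fin n, ∑ σ : Equiv.Perm (Fin n), |riffle k n σ - u| := by
            rw [Finset.sum_congr rfl (fun j _ => step2 j)]
      _ = ∑ σ : Equiv.Perm (Fin n), |riffle k n σ - u| := by
            rw [Finset.sum_const, Finset.card_univ, Fintype.card_fin]
            field_simp
            rw [nsmul_eq_mul]
  linarith
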